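/- Let λ = (λ_m)_{m≥1} be a nonincreasing sequence of nonnegative reals with λ_2 > 0 (hence λ_1 > 0), let 1 ≤ a_d ≤ d for each d ≥ 1, b_d = d − a_d, and set ∇_d = {k ∈ ℕ^d : k_1 ≤ … ≤ k_{a_d}} (symmetric setting). For the normalized error criterion define n'(ε',d) = #{k ∈ ∇_d : ∏_{l=1}^d λ_{k_l} > (ε')² · λ_1^d}. Then: (A) there exist C, p > 0 with the counted set finite of cardinality n'(ε',d) ≤ C·(ε')^{−p} for all d ∈ ℕ and ε' ∈ (0,1) (strong polynomial tractability) if and only if Σ_m λ_m^τ < ∞ for some τ > 0, λ_1 > λ_2, and sup_d b_d < ∞. (B) There exist C, p > 0, q ≥ 0 with n'(ε',d) ≤ C·(ε')^{−p}·d^q for all d ∈ ℕ, ε' ∈ (0,1) (polynomial tractability) if and only if Σ_m λ_m^τ < ∞ for some τ > 0 and b_d = O(ln d). -/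

import Mathlib

/-- Multi-indices in `ℕ^d` (entries `≥ 1`) that are nondecreasing along the first `a`
coordinates (the symmetric index set `∇_d`). -/
def symIdx (a d : ℕ) : Set (Fin d → ℕ) :=
  {k | (∀ i, 1 ≤ k i) ∧ ∀ i j : Fin d, i ≤ j → (j : ℕ) < a → k i ≤ k j}

/-- The set counted by the information complexity `n'(ε',d)` of the symmetric problem
with respect to the normalized error criterion (the squared initial error is `λ₁^d`). -/
def symCountN (Λ : ℕ → ℝ) (a : ℕ → ℕ) (d : ℕ) (ε' : ℝ) : Set (Fin d → ℕ) :=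
  {k : Fin d → ℕ | k ∈ symIdx (a d) d ∧ ε' ^ 2 * Λ 1 ^ d < ∏ l, Λ (k l)}

/-!
Lower bounds exhibit members of the counted set. In dimension one these are the indices
`1, …, m` with `λ_m > ε'² λ₁`, which gives `λ_m ^ p = O(m⁻²)`. In general they are the
`{1, 2}`-valued indices whose `2`s lie in an upward closed part of the block or beyond it: if
`λ₁ = λ₂` the `d + 1` "staircases" are counted for every `ε'`, and `m ^ j` indices are counted
at `ε'² ≈ (λ₂ / λ₁) ^ j` when `j` stretches of length `m` fit into the `b_d` free coordinates;
`j = 1` bounds `b_d` and `j ≈ log d` gives `b_d = O(log d)`.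

For the upper bound, Markov's inequality with the weights `∏ (λ_{k_l} / λ₁) ^ t` reduces the
count to a weighted sum over the symmetric indices. A block that is nondecreasing is determined
by the multiplicities of its values, so the block contributes at most
`∏_x ∑_{n ≤ a_d} (λ_x / λ₁) ^ (t n)`: a factor `a_d + 1` for each `x ∈ [2, s]` and, once `t` is
so large that `∑_{x > s} (λ_x / λ₁) ^ t ≤ 1/2`, a factor `e` for all `x > s` together. Each of the
`b_d` free coordinates contributes at most `s + 1`. For strong tractability `s = 1`.
-/

open Finset Filter Topology

section Counting

variable {d : ℕ}

lemma card_filter_Ico_val {lo hi : ℕ} (hhi : hi ≤ d) :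
    #{i : Fin d | lo ≤ (i : ℕ) ∧ (i : ℕ) < hi} = hi - lo := by
  rw [← card_map Fin.valEmbedding, ← Nat.card_Ico]
  congr 1
  ext n
  simp only [Finset.mem_map, mem_filter, mem_univ, true_and, Fin.valEmbedding_apply, mem_Ico]
  exact ⟨fun ⟨i, hi, hin⟩ => hin ▸ hi, fun hn => ⟨⟨n, by omega⟩, hn, rfl⟩⟩

def BlockMonotone (a : ℕ) (k : Fin d → ℕ) : Prop :=
  ∀ i j : Fin d, i ≤ j → (j : ℕ) < a → k i ≤ k j

namespace BlockMonotone

variable {a : ℕ} {k k' : Fin d → ℕ}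

lemma lt_iff (hk : BlockMonotone a k) (had : a ≤ d) (v : ℕ) {i : Fin d} (hi : (i : ℕ) < a) :
    v < k i ↔ a - #{j : Fin d | (j : ℕ) < a ∧ v < k j} ≤ i := by
  constructor
  · intro hv
    have hsub : ({j : Fin d | (i : ℕ) ≤ j ∧ (j : ℕ) < a} : Finset (Fin d)) ⊆
        ({j : Fin d | (j : ℕ) < a ∧ v < k j} : Finset (Fin d)) := by
      intro j hj
      simp only [mem_filter, mem_univ, true_and] at hj ⊢
      exact ⟨hj.2, hv.trans_le (hk i j (Fin.le_def.2 hj.1) hj.2)⟩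
    have := card_le_card hsub
    rw [card_filter_Ico_val had] at this
    omega
  · intro hle
    by_contra! hkv
    have hsub : ({j : Fin d | (j : ℕ) < a ∧ v < k j} : Finset (Fin d)) ⊆
        ({j : Fin d | (i : ℕ) + 1 ≤ j ∧ (j : ℕ) < a} : Finset (Fin d)) := by
      intro j hj
      simp only [mem_filter, mem_univ, true_and] at hj ⊢
      refine ⟨?_, hj.1⟩
      by_contra! hji
      exact (hj.2.trans_le ((hk j i (Fin.le_def.2 (by omega)) hi).trans hkv)).false
    have := card_le_card hsub
    rw [card_filter_Ico_val had] at this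
    omega

lemma le_of_card_lt_eq (hk : BlockMonotone a k) (hk' : BlockMonotone a k') (had : a ≤ d)
    (hk'1 : ∀ i, 1 ≤ k' i)
    (h : ∀ v, 1 ≤ v → #{j : Fin d | (j : ℕ) < a ∧ v < k j} = #{j : Fin d | (j : ℕ) < a ∧ v < k' j})
    {i : Fin d} (hi : (i : ℕ) < a) : k i ≤ k' i := by
  by_contra! hlt
  have := (hk.lt_iff had (k' i) hi).1 hlt
  rw [h _ (hk'1 i)] at this
  exact lt_irrefl _ ((hk'.lt_iff had (k' i) hi).2 this)

lemma eq_of_card_lt_eq (hk : BlockMonotone a k) (hk' : BlockMonotone a k') (had : a ≤ d)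
    (hk1 : ∀ i, 1 ≤ k i) (hk'1 : ∀ i, 1 ≤ k' i)
    (h : ∀ v, 1 ≤ v → #{j : Fin d | (j : ℕ) < a ∧ v < k j} = #{j : Fin d | (j : ℕ) < a ∧ v < k' j})
    {i : Fin d} (hi : (i : ℕ) < a) : k i = k' i :=
  (hk.le_of_card_lt_eq hk' had hk'1 h hi).antisymm
    (hk'.le_of_card_lt_eq hk had hk1 (fun v hv => (h v hv).symm) hi)

end BlockMonotone

lemma card_lt_eq_sum_card_eq {a K : ℕ} (v : ℕ) {k : Fin d → ℕ} (hK : ∀ i, k i ≤ K) :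
    #{j : Fin d | (j : ℕ) < a ∧ v < k j} = ∑ x ∈ Ioc v K, #{j : Fin d | (j : ℕ) < a ∧ k j = x} := by
  rw [card_eq_sum_card_fiberwise (f := k) (t := Ioc v K) fun j hj => by
    simp only [coe_filter, mem_univ, true_and, Set.mem_ofPred_eq, coe_Ioc, Set.mem_Ioc] at hj ⊢
    exact ⟨hj.2, hK j⟩]
  refine sum_congr rfl fun x hx => ?_
  rw [filter_filter]
  congr 1
  ext j
  simp only [mem_Ioc] at hx
  simp only [mem_filter, mem_univ, true_and]
  omega

end Counting

section Encoding

variable {d : ℕ} (a K : ℕ)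

open Classical in
noncomputable def symBox (a d K : ℕ) : Finset (Fin d → ℕ) :=
  {k ∈ Fintype.piFinset fun _ => Icc 1 K | BlockMonotone a k}

variable {a K} in
lemma mem_symBox {k : Fin d → ℕ} :
    k ∈ symBox a d K ↔ (∀ i, k i ∈ Icc 1 K) ∧ BlockMonotone a k := by
  simp only [symBox, mem_filter, Fintype.mem_piFinset]

/-- The multiplicity of the value `1` is left out: it is determined by the others, and
omitting it is what makes the bound of `sum_prod_symBox_le` uniform in `a`. -/
def blockMult (k : Fin d → ℕ) (x : Fin (K + 1)) : ℕ :=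
  if 2 ≤ (x : ℕ) then #{i : Fin d | (i : ℕ) < a ∧ k i = x} else 0

def tailPart (k : Fin d → ℕ) (i : Fin d) : ℕ :=
  if (i : ℕ) < a then 1 else k i

def symEncode (k : Fin d → ℕ) : (Fin (K + 1) → ℕ) × (Fin d → ℕ) :=
  (blockMult a K k, tailPart a k)

lemma injOn_symEncode (had : a ≤ d) :
    Set.InjOn (symEncode a K) (symBox a d K : Set (Fin d → ℕ)) := by
  intro k hk k' hk' h
  rw [mem_coe, mem_symBox] at hk hk'
  obtain ⟨hmult, htail⟩ := Prod.mk.inj h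
  have hcount (v : ℕ) (hv : 1 ≤ v) :
      #{j : Fin d | (j : ℕ) < a ∧ v < k j} = #{j : Fin d | (j : ℕ) < a ∧ v < k' j} := by
    rw [card_lt_eq_sum_card_eq v fun i => (mem_Icc.1 (hk.1 i)).2,
      card_lt_eq_sum_card_eq v fun i => (mem_Icc.1 (hk'.1 i)).2]
    refine sum_congr rfl fun x hx => ?_
    rw [mem_Ioc] at hx
    simpa [blockMult, show 2 ≤ x by omega] using congrFun hmult ⟨x, by omega⟩
  funext i
  by_cases hi : (i : ℕ) < a
  · exact hk.2.eq_of_card_lt_eq hk'.2 had (fun i => (mem_Icc.1 (hk.1 i)).1)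
      (fun i => (mem_Icc.1 (hk'.1 i)).1) hcount hi
  · simpa [tailPart, hi] using congrFun htail i

def multCells (x : ℕ) : Finset ℕ := if 2 ≤ x then range (a + 1) else {0}

def tailCells (i : Fin d) : Finset ℕ := if (i : ℕ) < a then {1} else Icc 1 K

lemma symEncode_mem {k : Fin d → ℕ} (hk : k ∈ symBox a d K) :
    symEncode a K k ∈
      Fintype.piFinset (fun x : Fin (K + 1) => multCells a x) ×ˢ
        Fintype.piFinset (tailCells a K) := by
  rw [mem_symBox] at hk
  refine mem_product.2 ⟨Fintype.mem_piFinset.2 fun x => ?_, Fintype.mem_piFinset.2 fun i => ?_⟩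
  · simp only [symEncode, blockMult, multCells]
    split_ifs
    · have hle : #{j : Fin d | (j : ℕ) < a ∧ k j = x} ≤ #{j : Fin d | (j : ℕ) < a} :=
        card_le_card fun j hj => by
          simp only [mem_filter, mem_univ, true_and] at hj ⊢
          exact hj.1
      rw [Fin.card_filter_val_lt] at hle
      exact mem_range.2 (by omega)
    · exact mem_singleton_self 0
  · simp only [symEncode, tailPart, tailCells]
    split_ifs
    · exact mem_singleton_self 1
    · exact hk.1 i

end Encoding

section WeightedSum

variable {d : ℕ} (a K : ℕ) {w : ℕ → ℝ}

lemma prod_block_eq_prod_pow_blockMult (hw1 : w 1 = 1) {k : Fin d → ℕ}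
    (hk : k ∈ symBox a d K) :
    ∏ i ∈ {i : Fin d | (i : ℕ) < a}, w (k i) = ∏ x : Fin (K + 1), w x ^ blockMult a K k x := by
  rw [mem_symBox] at hk
  simp only [blockMult]
  rw [Fin.prod_univ_eq_prod_range
      (fun x => w x ^ if 2 ≤ x then #{i : Fin d | (i : ℕ) < a ∧ k i = x} else 0) (K + 1),
    ← prod_fiberwise_of_maps_to (t := range (K + 1)) (g := k)
      fun i _ => mem_range.2 (Nat.lt_succ_of_le (mem_Icc.1 (hk.1 i)).2)]
  refine prod_congr rfl fun x _ => ?_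
  rw [filter_filter, prod_congr rfl fun i hi => by rw [(mem_filter.1 hi).2.2], prod_const]
  split_ifs with hx
  · rfl
  · obtain rfl | rfl : x = 0 ∨ x = 1 := by omega
    · rw [filter_false_of_mem fun i _ hi => (mem_Icc.1 (hk.1 i)).1.not_gt (by omega), card_empty]
    · rw [hw1, one_pow, one_pow]

lemma prod_eq_symEncode (hw1 : w 1 = 1) {k : Fin d → ℕ} (hk : k ∈ symBox a d K) :
    ∏ i, w (k i) =
      (∏ x : Fin (K + 1), w x ^ (symEncode a K k).1 x) * ∏ i, w ((symEncode a K k).2 i) := by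
  have htail : ∏ i, w (tailPart a k i) = ∏ i ∈ {i : Fin d | ¬ (i : ℕ) < a}, w (k i) := by
    rw [prod_filter]
    refine prod_congr rfl fun i _ => ?_
    by_cases hi : (i : ℕ) < a <;> simp [tailPart, hi, hw1]
  rw [symEncode, ← prod_block_eq_prod_pow_blockMult a K hw1 hk, htail,
    prod_filter_mul_prod_filter_not]

lemma sum_piFinset_prod_pow :
    ∑ y ∈ Fintype.piFinset (fun x : Fin (K + 1) => multCells a x) ×ˢ
        Fintype.piFinset (tailCells (d := d) a K),
      (∏ x : Fin (K + 1), w x ^ y.1 x) * ∏ i, w (y.2 i) =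
      (∏ x : Fin (K + 1), ∑ m ∈ multCells a x, w x ^ m) *
        ∏ i : Fin d, ∑ y ∈ tailCells a K i, w y := by
  rw [sum_product, prod_univ_sum, prod_univ_sum, sum_mul_sum]

variable {a} in
lemma sum_multCells_pow_le_exp {y : ℝ} (h0 : 0 ≤ y) (hy : y ≤ 1 / 2) (x : ℕ) :
    ∑ m ∈ multCells a x, y ^ m ≤ Real.exp (2 * y) := by
  unfold multCells
  split_ifs
  · calc ∑ m ∈ range (a + 1), y ^ m ≤ 1 / (1 - y) := by
          simpa using geom_sum_Ico_le_of_lt_one (m := 0) (n := a + 1) h0 (by linarith)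
      _ ≤ 1 + 2 * y := by
          rw [div_le_iff₀ (by linarith)]
          nlinarith
      _ ≤ Real.exp (2 * y) := by linarith [Real.add_one_le_exp (2 * y)]
  · simpa using Real.one_le_exp (by linarith : 0 ≤ 2 * y)

variable {a} in
lemma sum_multCells_pow_le {y : ℝ} (h0 : 0 ≤ y) {x : ℕ} (h1 : 2 ≤ x → y ≤ 1) :
    ∑ m ∈ multCells a x, y ^ m ≤ if 2 ≤ x then (a : ℝ) + 1 else 1 := by
  unfold multCells
  split_ifs with hx
  · calc ∑ m ∈ range (a + 1), y ^ m ≤ ∑ _m ∈ range (a + 1), (1 : ℝ) :=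
          sum_le_sum fun m _ => pow_le_one₀ h0 (h1 hx)
      _ = a + 1 := by simp
  · simp

variable {a K} in
lemma prod_sum_multCells_le (hw0 : ∀ x, 0 ≤ w x) (hwle : ∀ x, 1 ≤ x → w x ≤ 1) {s : ℕ}
    (htail : ∑ x ∈ Icc (s + 1) K, w x ≤ 1 / 2) :
    ∏ x : Fin (K + 1), ∑ m ∈ multCells a x, w x ^ m ≤ Real.exp 1 * ((a : ℝ) + 1) ^ (s - 1) := by
  have hg0 (x : ℕ) : 0 ≤ ∑ m ∈ multCells a x, w x ^ m :=
    sum_nonneg fun m _ => pow_nonneg (hw0 x) m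
  rw [Fin.prod_univ_eq_prod_range (fun x => ∑ m ∈ multCells a x, w x ^ m),
    ← prod_filter_not_mul_prod_filter (range (K + 1)) (· ≤ s)]
  have hlarge : ∏ x ∈ range (K + 1) with ¬ x ≤ s, ∑ m ∈ multCells a x, w x ^ m ≤ Real.exp 1 := by
    have hset : (range (K + 1)).filter (¬ · ≤ s) = Icc (s + 1) K := by
      ext x
      simp only [mem_filter, mem_range, mem_Icc]
      omega
    rw [hset]
    calc ∏ x ∈ Icc (s + 1) K, ∑ m ∈ multCells a x, w x ^ m
        ≤ ∏ x ∈ Icc (s + 1) K, Real.exp (2 * w x) :=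
          prod_le_prod (fun x _ => hg0 x) fun x hx => sum_multCells_pow_le_exp (hw0 x)
            ((single_le_sum (fun x _ => hw0 x) hx).trans htail) x
      _ = Real.exp (2 * ∑ x ∈ Icc (s + 1) K, w x) := by rw [mul_sum, Real.exp_sum]
      _ ≤ Real.exp 1 := Real.exp_le_exp.2 (by linarith)
  have hsmall : ∏ x ∈ range (K + 1) with x ≤ s, ∑ m ∈ multCells a x, w x ^ m ≤
      ((a : ℝ) + 1) ^ (s - 1) := by
    have hcard : #{x ∈ range (K + 1) | x ≤ s ∧ 2 ≤ x} ≤ s - 1 := by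
      refine (card_le_card fun x hx => ?_).trans_eq (Nat.card_Icc 2 s)
      simp only [mem_filter, mem_Icc] at hx ⊢
      omega
    calc ∏ x ∈ range (K + 1) with x ≤ s, ∑ m ∈ multCells a x, w x ^ m
        ≤ ∏ x ∈ range (K + 1) with x ≤ s, if 2 ≤ x then (a : ℝ) + 1 else 1 :=
          prod_le_prod (fun x _ => hg0 x) fun x _ =>
            sum_multCells_pow_le (hw0 x) fun hx => hwle x (by omega)
      _ = ((a : ℝ) + 1) ^ #{x ∈ range (K + 1) | x ≤ s ∧ 2 ≤ x} := by
          rw [prod_ite, prod_const, prod_const_one, mul_one, filter_filter]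
      _ ≤ ((a : ℝ) + 1) ^ (s - 1) := pow_le_pow_right₀ (by linarith [a.cast_nonneg (α := ℝ)]) hcard
  exact mul_le_mul hlarge hsmall (prod_nonneg fun x _ => hg0 x) (Real.exp_pos 1).le

variable {a} in
lemma prod_sum_tailCells (hw1 : w 1 = 1) :
    ∏ i : Fin d, ∑ y ∈ tailCells a K i, w y = (∑ y ∈ Icc 1 K, w y) ^ (d - a) := by
  have hcard : #{i : Fin d | ¬ (i : ℕ) < a} = d - a := by
    rw [← card_filter_Ico_val (lo := a) le_rfl]
    congr 1
    ext i
    simp only [mem_filter, mem_univ, true_and]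
    omega
  simp only [tailCells, apply_ite (fun c => ∑ y ∈ c, w y), sum_singleton, hw1]
  rw [prod_ite, prod_const_one, one_mul, prod_const, hcard]

variable {K} in
lemma sum_Icc_one_le_of_tail_le (hwle : ∀ x, 1 ≤ x → w x ≤ 1) {s : ℕ}
    (htail : ∑ x ∈ Icc (s + 1) K, w x ≤ 1 / 2) : ∑ x ∈ Icc 1 K, w x ≤ s + 1 := by
  rw [← sum_filter_add_sum_filter_not (Icc 1 K) (· ≤ s)]
  have hsmall : ∑ x ∈ Icc 1 K with x ≤ s, w x ≤ s := by
    have hcard : #{x ∈ Icc 1 K | x ≤ s} ≤ s := by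
      refine (card_le_card fun x hx => ?_).trans_eq (Nat.card_Icc 1 s)
      simp only [mem_filter, mem_Icc] at hx ⊢
      omega
    calc ∑ x ∈ Icc 1 K with x ≤ s, w x ≤ #{x ∈ Icc 1 K | x ≤ s} • (1 : ℝ) :=
          sum_le_card_nsmul _ _ _ fun x hx => hwle x (mem_Icc.1 (mem_filter.1 hx).1).1
      _ ≤ s := by rw [nsmul_one]; exact_mod_cast hcard
  have hlarge : ∑ x ∈ Icc 1 K with ¬ x ≤ s, w x = ∑ x ∈ Icc (s + 1) K, w x := by
    congr 1
    ext x
    simp only [mem_filter, mem_Icc]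
    omega
  linarith

theorem sum_prod_symBox_le (hw0 : ∀ x, 0 ≤ w x) (hw1 : w 1 = 1) (hwle : ∀ x, 1 ≤ x → w x ≤ 1)
    {s : ℕ} (htail : ∑ x ∈ Icc (s + 1) K, w x ≤ 1 / 2) (had : a ≤ d) :
    ∑ k ∈ symBox a d K, ∏ i, w (k i) ≤
      Real.exp 1 * ((a : ℝ) + 1) ^ (s - 1) * ((s : ℝ) + 1) ^ (d - a) := by
  set F : (Fin (K + 1) → ℕ) × (Fin d → ℕ) → ℝ := fun y =>
    (∏ x : Fin (K + 1), w x ^ y.1 x) * ∏ i, w (y.2 i)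
  have hF (y) : 0 ≤ F y :=
    mul_nonneg (prod_nonneg fun x _ => pow_nonneg (hw0 x) _) (prod_nonneg fun i _ => hw0 _)
  calc ∑ k ∈ symBox a d K, ∏ i, w (k i) = ∑ k ∈ symBox a d K, F (symEncode a K k) :=
        sum_congr rfl fun k hk => prod_eq_symEncode a K hw1 hk
    _ = ∑ y ∈ (symBox a d K).image (symEncode a K), F y :=
        (sum_image (injOn_symEncode a K had)).symm
    _ ≤ ∑ y ∈ Fintype.piFinset (fun x : Fin (K + 1) => multCells a x) ×ˢ
          Fintype.piFinset (tailCells a K), F y :=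
        sum_le_sum_of_subset_of_nonneg (image_subset_iff.2 fun k hk => symEncode_mem a K hk)
          fun y _ _ => hF y
    _ = (∏ x : Fin (K + 1), ∑ m ∈ multCells a x, w x ^ m) * (∑ y ∈ Icc 1 K, w y) ^ (d - a) := by
        rw [sum_piFinset_prod_pow, prod_sum_tailCells K hw1]
    _ ≤ Real.exp 1 * ((a : ℝ) + 1) ^ (s - 1) * ((s : ℝ) + 1) ^ (d - a) :=
        mul_le_mul (prod_sum_multCells_le hw0 hwle htail)
          (pow_le_pow_left₀ (sum_nonneg fun x _ => hw0 x)
            (sum_Icc_one_le_of_tail_le hwle htail) _)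
          (pow_nonneg (sum_nonneg fun x _ => hw0 x) _) (by positivity)

end WeightedSum

section UpperBound

variable {Λ : ℕ → ℝ} {a : ℕ → ℕ} {d : ℕ} {ε' : ℝ}

lemma mem_symCountN_iff (h1 : 0 < Λ 1) {k : Fin d → ℕ} :
    k ∈ symCountN Λ a d ε' ↔ k ∈ symIdx (a d) d ∧ ε' ^ 2 < ∏ l, Λ (k l) / Λ 1 := by
  rw [prod_div_distrib, prod_const, card_univ, Fintype.card_fin, lt_div_iff₀ (pow_pos h1 d)]
  exact Iff.rfl

lemma lt_of_mem_symCountN (hnn : ∀ m, 0 ≤ Λ m) (hmono : ∀ m n : ℕ, 1 ≤ m → m ≤ n → Λ n ≤ Λ m)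
    (h1 : 0 < Λ 1) {K : ℕ} (hK : ∀ m, K ≤ m → Λ m ≤ ε' ^ 2 * Λ 1) {k : Fin d → ℕ}
    (hk : k ∈ symCountN Λ a d ε') (i : Fin d) : k i < K := by
  rw [mem_symCountN_iff h1] at hk
  by_contra! hKi
  have hν0 (l : Fin d) : 0 ≤ Λ (k l) / Λ 1 := div_nonneg (hnn _) h1.le
  have hprod : ∏ l, Λ (k l) / Λ 1 ≤ Λ (k i) / Λ 1 := by
    rw [← mul_prod_erase univ _ (mem_univ i)]
    exact mul_le_of_le_one_right (hν0 i) (prod_le_one (fun l _ => hν0 l) fun l _ =>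
      (div_le_one h1).2 (hmono 1 _ le_rfl (hk.1.1 l)))
  have hsmall : Λ (k i) / Λ 1 ≤ ε' ^ 2 := (div_le_iff₀ h1).2 (hK _ hKi)
  linarith [hk.2]

lemma ncard_mul_le_sum {ι : Type*} {S : Set ι} {B : Finset ι} {f : ι → ℝ} {c : ℝ}
    (hSB : S ⊆ B) (hc : ∀ k ∈ S, c ≤ f k) (hf : ∀ k ∈ B, 0 ≤ f k) :
    S.ncard * c ≤ ∑ k ∈ B, f k := by
  classical
  have hS : S = ↑(B.filter (· ∈ S)) := by
    ext k
    simpa using fun hk => hSB hk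
  rw [hS, Set.ncard_coe_finset]
  calc (#(B.filter (· ∈ S)) : ℝ) * c ≤ ∑ k ∈ B.filter (· ∈ S), f k := by
        rw [← nsmul_eq_mul]
        exact card_nsmul_le_sum _ _ _ fun k hk => hc k (mem_filter.1 hk).2
    _ ≤ ∑ k ∈ B, f k := sum_le_sum_of_subset_of_nonneg (filter_subset _ _) fun k hk _ => hf k hk

lemma tendsto_zero_of_summable_rpow (hnn : ∀ m, 0 ≤ Λ m) {τ : ℝ} (hτ : 0 < τ)
    (hsum : Summable fun m : ℕ => Λ (m + 1) ^ τ) : Tendsto Λ atTop (𝓝 0) := by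
  have h := hsum.tendsto_atTop_zero.rpow_const (p := τ⁻¹) (Or.inr (inv_nonneg.2 hτ.le))
  simp only [Real.rpow_rpow_inv (hnn _) hτ.ne', Real.zero_rpow (inv_ne_zero hτ.ne')] at h
  exact (tendsto_add_atTop_iff_nat 1).1 h

/-- Raising the exponent damps every term beyond `s` by the factor `(Λ (s + 1) / Λ 1) ^ n`. -/
lemma exists_sum_Icc_rpow_le_half (hnn : ∀ m, 0 ≤ Λ m)
    (hmono : ∀ m n : ℕ, 1 ≤ m → m ≤ n → Λ n ≤ Λ m) (h1 : 0 < Λ 1) {τ : ℝ} (hτ : 0 < τ)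
    (hsum : Summable fun m : ℕ => Λ (m + 1) ^ τ) {s : ℕ} (hs : Λ (s + 1) < Λ 1) :
    ∃ t : ℝ, 0 < t ∧ ∀ K, ∑ x ∈ Icc (s + 1) K, (Λ x / Λ 1) ^ t ≤ 1 / 2 := by
  set r := Λ (s + 1) / Λ 1
  have hr0 : 0 ≤ r := div_nonneg (hnn _) h1.le
  have hν0 (x : ℕ) : 0 ≤ Λ x / Λ 1 := div_nonneg (hnn x) h1.le
  have hsum' : Summable fun x => (Λ x / Λ 1) ^ τ := by
    simp_rw [Real.div_rpow (hnn _) h1.le]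
    exact ((summable_nat_add_iff (f := fun m => Λ m ^ τ) 1).1 hsum).div_const _
  set M := ∑' x, (Λ x / Λ 1) ^ τ
  have hM : 0 ≤ M := tsum_nonneg fun x => Real.rpow_nonneg (hν0 x) τ
  obtain ⟨n, hn⟩ := exists_pow_lt_of_lt_one (show 0 < 1 / (2 * (M + 1)) by positivity)
    ((div_lt_one h1).2 hs)
  have hnM : 1 / (2 * (M + 1)) * M ≤ 1 / 2 := by
    rw [div_mul_eq_mul_div, one_mul, div_le_div_iff₀ (by positivity) two_pos]
    nlinarith
  refine ⟨τ + n, by positivity, fun K => ?_⟩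
  calc ∑ x ∈ Icc (s + 1) K, (Λ x / Λ 1) ^ (τ + n)
      ≤ ∑ x ∈ Icc (s + 1) K, r ^ n * (Λ x / Λ 1) ^ τ := by
        refine sum_le_sum fun x hx => ?_
        rw [Real.rpow_add' (hν0 x) (by positivity), Real.rpow_natCast, mul_comm]
        exact mul_le_mul_of_nonneg_right (pow_le_pow_left₀ (hν0 x)
          (div_le_div_of_nonneg_right (hmono _ _ (by omega) (mem_Icc.1 hx).1) h1.le) n)
          (Real.rpow_nonneg (hν0 x) τ)
    _ = r ^ n * ∑ x ∈ Icc (s + 1) K, (Λ x / Λ 1) ^ τ := (mul_sum ..).symm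
    _ ≤ r ^ n * M := mul_le_mul_of_nonneg_left
        (hsum'.sum_le_tsum _ fun x _ => Real.rpow_nonneg (hν0 x) τ) (pow_nonneg hr0 n)
    _ ≤ 1 / 2 := by nlinarith [mul_le_mul_of_nonneg_right hn.le hM]

/-- Markov's inequality for the weights `∏ (Λ (k l) / Λ 1) ^ t`, which exceed `ε' ^ (2 t)` on
the counted set; the decay of `Λ` confines the counted set to a box. -/
theorem ncard_symCountN_le (hnn : ∀ m, 0 ≤ Λ m) (hmono : ∀ m n : ℕ, 1 ≤ m → m ≤ n → Λ n ≤ Λ m)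
    (h1 : 0 < Λ 1) (hlim : Tendsto Λ atTop (𝓝 0)) {t : ℝ} (ht : 0 < t) {s : ℕ}
    (htail : ∀ K, ∑ x ∈ Icc (s + 1) K, (Λ x / Λ 1) ^ t ≤ 1 / 2) (had : a d ≤ d) (hε : 0 < ε') :
    (symCountN Λ a d ε').Finite ∧ ((symCountN Λ a d ε').ncard : ℝ) ≤
      ε' ^ (-(2 * t)) * (Real.exp 1 * ((a d : ℝ) + 1) ^ (s - 1) * ((s : ℝ) + 1) ^ (d - a d)) := by
  set w : ℕ → ℝ := fun x => (Λ x / Λ 1) ^ t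
  have hν0 (x : ℕ) : 0 ≤ Λ x / Λ 1 := div_nonneg (hnn x) h1.le
  obtain ⟨K, hK⟩ := eventually_atTop.1
    (hlim.eventually (ge_mem_nhds (by positivity : 0 < ε' ^ 2 * Λ 1)))
  have hsub : symCountN Λ a d ε' ⊆ symBox (a d) d K := fun k hk => by
    rw [mem_coe, mem_symBox]
    exact ⟨fun i => mem_Icc.2 ⟨hk.1.1 i, (lt_of_mem_symCountN hnn hmono h1 hK hk i).le⟩, hk.1.2⟩
  refine ⟨(symBox (a d) d K).finite_toSet.subset hsub, ?_⟩
  have hmarkov := ncard_mul_le_sum hsub (c := (ε' ^ 2) ^ t) (f := fun k => ∏ i, w (k i))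
    (fun k hk => by
      rw [mem_symCountN_iff h1] at hk
      rw [Real.finsetProd_rpow _ _ fun i _ => hν0 _]
      exact Real.rpow_le_rpow (sq_nonneg _) hk.2.le ht.le)
    fun k _ => prod_nonneg fun i _ => Real.rpow_nonneg (hν0 _) t
  have hbound := sum_prod_symBox_le (a d) K (w := w) (fun x => Real.rpow_nonneg (hν0 x) t)
    (by simp [w, div_self h1.ne'])
    (fun x hx => Real.rpow_le_one (hν0 x) ((div_le_one h1).2 (hmono 1 x le_rfl hx)) ht.le)
    (htail K) had
  have hεt : ε' ^ (-(2 * t)) = ((ε' ^ 2) ^ t)⁻¹ := by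
    rw [← Real.rpow_natCast, ← Real.rpow_mul hε.le, ← Real.rpow_neg hε.le]
    norm_num
  rw [hεt, inv_mul_eq_div, le_div_iff₀ (by positivity)]
  exact hmarkov.trans hbound

end UpperBound

section LowerBound

variable {Λ : ℕ → ℝ} {a : ℕ → ℕ} {d : ℕ} {ε' : ℝ}

lemma le_ncard_of_injective {α ι : Type*} [Fintype ι] {S : Set α} (hS : S.Finite) {f : ι → α}
    (hf : Function.Injective f) (hmem : ∀ x, f x ∈ S) : Fintype.card ι ≤ S.ncard := by
  rw [← Nat.card_eq_fintype_card, ← Set.ncard_range_of_injective hf]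
  exact Set.ncard_le_ncard (Set.range_subset_iff.2 hmem) hS

lemma le_ncard_symCountN_one (hmono : ∀ m n : ℕ, 1 ≤ m → m ≤ n → Λ n ≤ Λ m) (h1 : 0 < Λ 1)
    {m : ℕ} (hm : ε' ^ 2 < Λ m / Λ 1) (hfin : (symCountN Λ a 1 ε').Finite) :
    m ≤ (symCountN Λ a 1 ε').ncard := by
  simpa using le_ncard_of_injective hfin (f := fun (v : Fin m) (_ : Fin 1) => (v : ℕ) + 1)
    (fun v v' h => Fin.ext (by simpa using congrFun h 0)) fun v => by
      rw [mem_symCountN_iff h1]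
      refine ⟨⟨fun _ => Nat.le_add_left 1 _, fun i j _ _ => by rw [Subsingleton.elim i j]⟩, ?_⟩
      rw [Fin.prod_univ_one]
      exact hm.trans_le (div_le_div_of_nonneg_right (hmono _ _ (by omega) v.isLt) h1.le)

def pattern (T : Finset (Fin d)) (i : Fin d) : ℕ := if i ∈ T then 2 else 1

lemma pattern_injective : Function.Injective (pattern (d := d)) := by
  intro T T' h
  ext i
  have := congrFun h i
  simp only [pattern] at this
  split_ifs at this <;> simp_all

lemma pattern_mem_symCountN (h1 : 0 < Λ 1) {T : Finset (Fin d)}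
    (hup : ∀ i j : Fin d, i ≤ j → (j : ℕ) < a d → i ∈ T → j ∈ T)
    (hε : ε' ^ 2 < (Λ 2 / Λ 1) ^ #T) : pattern T ∈ symCountN Λ a d ε' := by
  rw [mem_symCountN_iff h1]
  refine ⟨⟨fun i => ?_, fun i j hij hj => ?_⟩, ?_⟩
  · unfold pattern
    split_ifs <;> omega
  · unfold pattern
    by_cases hi : i ∈ T
    · simp [hi, hup i j hij hj hi]
    · simp only [hi, if_false]
      split_ifs <;> omega
  · have hl (l : Fin d) : Λ (pattern T l) / Λ 1 = if l ∈ T then Λ 2 / Λ 1 else 1 := by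
      unfold pattern
      split_ifs <;> simp [div_self h1.ne']
    rwa [prod_congr rfl fun l _ => hl l, Fintype.prod_ite_mem, prod_const]

lemma card_le_ncard_symCountN (h1 : 0 < Λ 1) {ι : Type*} [Fintype ι] {T : ι → Finset (Fin d)}
    (hT : Function.Injective T)
    (hup : ∀ x, ∀ i j : Fin d, i ≤ j → (j : ℕ) < a d → i ∈ T x → j ∈ T x)
    (hε : ∀ x, ε' ^ 2 < (Λ 2 / Λ 1) ^ #(T x)) (hfin : (symCountN Λ a d ε').Finite) :
    Fintype.card ι ≤ (symCountN Λ a d ε').ncard :=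
  le_ncard_of_injective hfin (pattern_injective.comp hT) fun x =>
    pattern_mem_symCountN h1 (hup x) (hε x)

lemma succ_le_ncard_symCountN_of_eq (h1 : 0 < Λ 1) (heq : Λ 2 = Λ 1) (hε : ε' ^ 2 < 1)
    (hfin : (symCountN Λ a d ε').Finite) : d + 1 ≤ (symCountN Λ a d ε').ncard := by
  have hcard (t : Fin (d + 1)) : #{i : Fin d | d - t ≤ (i : ℕ)} = t := by
    rw [filter_congr (q := fun i : Fin d => d - t ≤ (i : ℕ) ∧ (i : ℕ) < d) fun i _ => by
      simp [i.isLt], card_filter_Ico_val le_rfl]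
    omega
  simpa using card_le_ncard_symCountN h1
    (T := fun t : Fin (d + 1) => {i : Fin d | d - t ≤ (i : ℕ)})
    (fun t t' h => Fin.ext (by
      have := congrArg card h
      simp only [hcard] at this
      exact this))
    (fun t i j hij _ hi => by
      simp only [mem_filter, mem_univ, true_and] at hi ⊢
      exact hi.trans (Fin.le_def.1 hij))
    (fun t => by rwa [heq, div_self h1.ne', one_pow]) hfin

/-- Each `f : Fin j → Fin m` places a `2` at position `a d + m l + f l` of the `l`-th
stretch of length `m` beyond the block. -/
lemma pow_le_ncard_symCountN (h1 : 0 < Λ 1) {j m : ℕ} (hjm : a d + j * m ≤ d)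
    (hε : ε' ^ 2 < (Λ 2 / Λ 1) ^ j) (hfin : (symCountN Λ a d ε').Finite) :
    m ^ j ≤ (symCountN Λ a d ε').ncard := by
  let e : Fin j × Fin m → Fin d := fun p =>
    ⟨a d + finProdFinEquiv p, by have := (finProdFinEquiv p).isLt; omega⟩
  have he : Function.Injective e := fun p p' h =>
    finProdFinEquiv.injective (Fin.ext (by simpa [e] using congrArg Fin.val h))
  have hgraph (f : Fin j → Fin m) : Function.Injective fun l => e (l, f l) :=
    he.comp fun l l' h => (Prod.mk.inj h).1
  have hT : Function.Injective fun f : Fin j → Fin m => univ.image fun l => e (l, f l) := by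
    intro f f' (h : univ.image (fun l => e (l, f l)) = univ.image (fun l => e (l, f' l)))
    funext l
    have hl : e (l, f l) ∈ univ.image fun l => e (l, f' l) := by
      rw [← h]
      exact mem_image_of_mem _ (mem_univ l)
    obtain ⟨l', -, hl'⟩ := mem_image.1 hl
    obtain ⟨rfl, hf⟩ := Prod.mk.inj (he hl')
    exact hf.symm
  simpa using card_le_ncard_symCountN h1 hT
    (fun f i i' hii' hi' hi => by
      obtain ⟨l, -, rfl⟩ := mem_image.1 hi
      exact absurd (Fin.le_def.1 hii') (by simp [e]; omega))
    (fun f => by rwa [card_image_of_injective _ (hgraph f), card_univ, Fintype.card_fin]) hfin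

end LowerBound

section Tractability

variable (Λ : ℕ → ℝ) (a : ℕ → ℕ)

def SymStrongPolyTractable : Prop :=
  ∃ C p : ℝ, 0 < C ∧ 0 < p ∧ ∀ d : ℕ, 1 ≤ d → ∀ ε' : ℝ, 0 < ε' → ε' < 1 →
    (symCountN Λ a d ε').Finite ∧ ((symCountN Λ a d ε').ncard : ℝ) ≤ C * ε' ^ (-p)

def SymPolyTractable : Prop :=
  ∃ C p q : ℝ, 0 < C ∧ 0 < p ∧ 0 ≤ q ∧ ∀ d : ℕ, 1 ≤ d → ∀ ε' : ℝ, 0 < ε' → ε' < 1 →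
    (symCountN Λ a d ε').Finite ∧
      ((symCountN Λ a d ε').ncard : ℝ) ≤ C * ε' ^ (-p) * (d : ℝ) ^ q

variable {Λ a}

lemma SymStrongPolyTractable.symPolyTractable (h : SymStrongPolyTractable Λ a) :
    SymPolyTractable Λ a := by
  obtain ⟨C, p, hC, hp, H⟩ := h
  exact ⟨C, p, 0, hC, hp, le_rfl, fun d hd ε' h0 h1 => by simpa using H d hd ε' h0 h1⟩

/-- With `ε' ^ 2 = Λ m / (2 Λ 1)`, the `m` one-dimensional indices `1, …, m` are counted, so
`Λ m ^ p = O(m⁻²)`. -/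
lemma SymPolyTractable.summable (hnn : ∀ m, 0 ≤ Λ m)
    (hmono : ∀ m n : ℕ, 1 ≤ m → m ≤ n → Λ n ≤ Λ m) (h1 : 0 < Λ 1) (h : SymPolyTractable Λ a) :
    ∃ τ : ℝ, 0 < τ ∧ Summable fun m : ℕ => Λ (m + 1) ^ τ := by
  obtain ⟨C, p, q, -, hp, -, H⟩ := h
  refine ⟨p, hp, ?_⟩
  have key (m : ℕ) (hm : 1 ≤ m) : Λ m ^ p ≤ (2 * Λ 1) ^ p * C ^ 2 * (1 / (m : ℝ) ^ 2) := by
    rcases (hnn m).eq_or_lt with h0 | hpos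
    · rw [← h0, Real.zero_rpow hp.ne']
      positivity
    set x := Λ m / (2 * Λ 1)
    have hx : 0 < x := by positivity
    have hΛm : Λ m = 2 * Λ 1 * x := by
      simp only [x]
      field_simp
    have hx1 : x < 1 := by
      have := hmono 1 m le_rfl hm
      rw [div_lt_one (by positivity)]
      linarith
    set ε := Real.sqrt x
    have hε0 : 0 < ε := Real.sqrt_pos.2 hx
    have hεsq : ε ^ 2 = x := Real.sq_sqrt hx.le
    obtain ⟨hfin, hle⟩ := H 1 le_rfl ε hε0 ((Real.sqrt_lt' one_pos).2 (by rwa [one_pow]))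
    have hcount := le_ncard_symCountN_one hmono h1 (m := m) (by
      rw [hεsq]
      exact (div_lt_div_iff_of_pos_left hpos (by positivity) h1).2 (by linarith)) hfin
    have hmC : (m : ℝ) * ε ^ p ≤ C := by
      have := (Nat.cast_le.2 hcount).trans hle
      rw [Nat.cast_one, Real.one_rpow, mul_one, Real.rpow_neg hε0.le] at this
      rwa [← le_div_iff₀ (by positivity), div_eq_mul_inv]
    have hεp : (ε ^ p) ^ 2 = x ^ p := by
      rw [← Real.rpow_natCast, ← Real.rpow_mul hε0.le, mul_comm, Real.rpow_mul hε0.le,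
        Real.rpow_natCast, hεsq]
    have hm0 : (0 : ℝ) < m := by exact_mod_cast hm
    rw [hΛm, Real.mul_rpow (by positivity) hx.le, mul_assoc]
    refine mul_le_mul_of_nonneg_left ?_ (by positivity)
    rw [← hεp, mul_one_div, le_div_iff₀ (by positivity), ← mul_pow, mul_comm]
    exact pow_le_pow_left₀ (by positivity) hmC 2
  refine Summable.of_nonneg_of_le (fun m => Real.rpow_nonneg (hnn _) p)
    (fun m => key (m + 1) (by omega)) ?_
  exact ((summable_nat_add_iff (f := fun n : ℕ => 1 / (n : ℝ) ^ 2) 1).2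
    (Real.summable_one_div_nat_pow.2 one_lt_two)).mul_left _

lemma SymStrongPolyTractable.apply_two_lt_apply_one
    (hmono : ∀ m n : ℕ, 1 ≤ m → m ≤ n → Λ n ≤ Λ m) (h1 : 0 < Λ 1)
    (h : SymStrongPolyTractable Λ a) : Λ 2 < Λ 1 := by
  obtain ⟨C, p, -, -, H⟩ := h
  refine (hmono 1 2 le_rfl one_le_two).lt_of_ne fun heq => ?_
  set N := ⌈C * (1 / 2 : ℝ) ^ (-p)⌉₊
  obtain ⟨hfin, hle⟩ := H (N + 1) (by omega) (1 / 2) (by norm_num) (by norm_num)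
  have hcount := (Nat.cast_le (α := ℝ)).2 (succ_le_ncard_symCountN_of_eq h1 heq (by norm_num) hfin)
  have := Nat.le_ceil (C * (1 / 2 : ℝ) ^ (-p))
  push_cast at hcount
  linarith

/-- The bound is evaluated at `ε' ^ 2 = (Λ 2 / (2 Λ 1)) ^ j`, just below the normalized product
`(Λ 2 / Λ 1) ^ j` of the patterns of `pow_le_ncard_symCountN`. -/
lemma pow_le_of_ncard_symCountN_le (h1 : 0 < Λ 1) (h2 : 0 < Λ 2) (h21 : Λ 2 ≤ Λ 1)
    {C p D : ℝ} {d : ℕ} (H : ∀ ε' : ℝ, 0 < ε' → ε' < 1 →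
      (symCountN Λ a d ε').Finite ∧ ((symCountN Λ a d ε').ncard : ℝ) ≤ C * ε' ^ (-p) * D)
    {j m : ℕ} (hj : 1 ≤ j) (hjm : a d + j * m ≤ d) :
    (m : ℝ) ^ j ≤ C * ((Λ 2 / Λ 1 / 2) ^ (-p / 2)) ^ j * D := by
  set μ := Λ 2 / Λ 1 / 2
  have hμ0 : 0 < μ := by positivity
  have hμ1 : μ < 1 := by
    have := (div_le_one h1).2 h21
    simp only [μ]
    linarith
  set ε := μ ^ ((j : ℝ) / 2)
  have hε0 : 0 < ε := Real.rpow_pos_of_pos hμ0 _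
  have hεsq : ε ^ 2 = μ ^ j := by
    rw [← Real.rpow_natCast, ← Real.rpow_mul hμ0.le, ← Real.rpow_natCast]
    norm_num
  have hεp : ε ^ (-p) = (μ ^ (-p / 2)) ^ j := by
    rw [← Real.rpow_mul hμ0.le, ← Real.rpow_natCast, ← Real.rpow_mul hμ0.le]
    ring_nf
  obtain ⟨hfin, hle⟩ := H ε hε0 (Real.rpow_lt_one hμ0.le hμ1 (by positivity))
  have hcount := pow_le_ncard_symCountN h1 hjm (by
    rw [hεsq]
    exact pow_lt_pow_left₀ (half_lt_self (by positivity)) hμ0.le (by omega)) hfin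
  calc (m : ℝ) ^ j ≤ (symCountN Λ a d ε).ncard := by exact_mod_cast hcount
    _ ≤ _ := hle.trans_eq (by rw [hεp])

lemma SymStrongPolyTractable.exists_sub_le (h1 : 0 < Λ 1) (h2 : 0 < Λ 2) (h21 : Λ 2 ≤ Λ 1)
    (had : ∀ d, 1 ≤ d → a d ≤ d) (h : SymStrongPolyTractable Λ a) :
    ∃ B : ℕ, ∀ d : ℕ, 1 ≤ d → d - a d ≤ B := by
  obtain ⟨C, p, -, -, H⟩ := h
  refine ⟨⌈C * (Λ 2 / Λ 1 / 2) ^ (-p / 2)⌉₊, fun d hd => ?_⟩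
  have hb := pow_le_of_ncard_symCountN_le h1 h2 h21 (D := 1)
    (fun ε' h0 h1 => by simpa using H d hd ε' h0 h1) le_rfl
    (m := d - a d) (by have := had d hd; omega)
  rw [pow_one, pow_one, mul_one] at hb
  exact_mod_cast hb.trans (Nat.le_ceil _)

/-- With `j = ⌈log d⌉` stretches, `d ^ q ≤ (exp q) ^ j`, so taking `j`-th roots bounds the
stretch length `m` uniformly in `d`, and `d - a d < j (m + 1)`. -/
lemma SymPolyTractable.exists_sub_le_mul_log (h1 : 0 < Λ 1) (h2 : 0 < Λ 2) (h21 : Λ 2 ≤ Λ 1)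
    (had : ∀ d, 1 ≤ d → a d ≤ d) (h : SymPolyTractable Λ a) :
    ∃ c : ℝ, 0 < c ∧ ∀ d : ℕ, 2 ≤ d → ((d - a d : ℕ) : ℝ) ≤ c * Real.log d := by
  obtain ⟨C, p, q, -, -, hq, H⟩ := h
  set M := max C 1 * (Λ 2 / Λ 1 / 2) ^ (-p / 2) * Real.exp q
  have hM : 0 ≤ M := by positivity
  refine ⟨3 * (M + 1), by positivity, fun d hd => ?_⟩
  have hd0 : (0 : ℝ) < d := by positivity
  have hlog : 1 / 2 < Real.log d := by
    have := Real.log_le_log two_pos (by exact_mod_cast hd : (2 : ℝ) ≤ d)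
    linarith [Real.log_two_gt_d9]
  set j := ⌈Real.log d⌉₊
  have hj : 1 ≤ j := Nat.one_le_iff_ne_zero.2 (Nat.ceil_pos.2 (by linarith)).ne'
  have hjlog : (j : ℝ) ≤ 3 * Real.log d := by
    linarith [Nat.ceil_lt_add_one (by linarith : 0 ≤ Real.log d)]
  have hjm : a d + j * ((d - a d) / j) ≤ d := by
    have := Nat.mul_div_le (d - a d) j
    have := had d (by omega)
    omega
  have hb : d - a d < j * ((d - a d) / j + 1) := Nat.lt_mul_div_succ _ (by omega)
  set m := (d - a d) / j
  have hmM : (m : ℝ) ≤ M := by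
    have hpow := pow_le_of_ncard_symCountN_le h1 h2 h21 (H d (by omega)) hj hjm
    refine (pow_le_pow_iff_left₀ (Nat.cast_nonneg _) hM (by omega)).1 (hpow.trans ?_)
    have hC : C ≤ max C 1 ^ j :=
      (le_max_left C 1).trans (le_self_pow₀ (le_max_right C 1) (by omega))
    have hdq : (d : ℝ) ^ q ≤ Real.exp q ^ j := by
      rw [← Real.exp_nat_mul, Real.rpow_def_of_pos hd0]
      exact Real.exp_le_exp.2 (by nlinarith [Nat.le_ceil (Real.log d)])
    rw [mul_pow, mul_pow]
    gcongr
  calc ((d - a d : ℕ) : ℝ) ≤ j * (m + 1) := by exact_mod_cast hb.le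
    _ ≤ (3 * Real.log d) * (M + 1) := mul_le_mul hjlog (by linarith) (by positivity) (by linarith)
    _ = 3 * (M + 1) * Real.log d := by ring

end Tractability

section Sufficiency

variable {Λ : ℕ → ℝ} {a : ℕ → ℕ}

lemma symStrongPolyTractable_of (hnn : ∀ m, 0 ≤ Λ m)
    (hmono : ∀ m n : ℕ, 1 ≤ m → m ≤ n → Λ n ≤ Λ m) (h1 : 0 < Λ 1) (had : ∀ d, 1 ≤ d → a d ≤ d)
    {τ : ℝ} (hτ : 0 < τ) (hsum : Summable fun m : ℕ => Λ (m + 1) ^ τ) (h21 : Λ 2 < Λ 1)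
    {B : ℕ} (hB : ∀ d : ℕ, 1 ≤ d → d - a d ≤ B) : SymStrongPolyTractable Λ a := by
  obtain ⟨t, ht, htail⟩ := exists_sum_Icc_rpow_le_half hnn hmono h1 hτ hsum (s := 1) h21
  refine ⟨Real.exp 1 * 2 ^ B, 2 * t, by positivity, by positivity, fun d hd ε' hε0 _ => ?_⟩
  obtain ⟨hfin, hle⟩ := ncard_symCountN_le hnn hmono h1 (tendsto_zero_of_summable_rpow hnn hτ hsum)
    ht htail (had d hd) hε0
  refine ⟨hfin, hle.trans ?_⟩
  calc ε' ^ (-(2 * t)) * (Real.exp 1 * ((a d : ℝ) + 1) ^ (1 - 1) * (((1 : ℕ) : ℝ) + 1) ^ (d - a d))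
      = Real.exp 1 * 2 ^ (d - a d) * ε' ^ (-(2 * t)) := by norm_num; ring
    _ ≤ Real.exp 1 * 2 ^ B * ε' ^ (-(2 * t)) := by gcongr; exacts [one_le_two, hB d hd]

lemma symPolyTractable_of (hnn : ∀ m, 0 ≤ Λ m)
    (hmono : ∀ m n : ℕ, 1 ≤ m → m ≤ n → Λ n ≤ Λ m) (h1 : 0 < Λ 1)
    (ha : ∀ d : ℕ, 1 ≤ d → 1 ≤ a d ∧ a d ≤ d)
    {τ : ℝ} (hτ : 0 < τ) (hsum : Summable fun m : ℕ => Λ (m + 1) ^ τ) {c : ℝ}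
    (hc0 : 0 ≤ c) (hc : ∀ d : ℕ, 2 ≤ d → ((d - a d : ℕ) : ℝ) ≤ c * Real.log d) :
    SymPolyTractable Λ a := by
  have hlim := tendsto_zero_of_summable_rpow hnn hτ hsum
  obtain ⟨s, hs⟩ := eventually_atTop.1 (hlim.eventually (gt_mem_nhds h1))
  obtain ⟨t, ht, htail⟩ := exists_sum_Icc_rpow_le_half hnn hmono h1 hτ hsum (hs (s + 1) (by omega))
  have hlogs : 0 ≤ Real.log ((s : ℝ) + 1) := Real.log_nonneg (by linarith [s.cast_nonneg (α := ℝ)])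
  refine ⟨Real.exp 1 * 2 ^ (s - 1), 2 * t, ((s - 1 : ℕ) : ℝ) + c * Real.log (s + 1),
    by positivity, by positivity, by positivity, fun d hd ε' hε0 _ => ?_⟩
  obtain ⟨hfin, hle⟩ := ncard_symCountN_le hnn hmono h1 hlim ht htail (ha d hd).2 hε0
  refine ⟨hfin, hle.trans ?_⟩
  have hd0 : (0 : ℝ) < d := by exact_mod_cast hd
  have hA : ((a d : ℝ) + 1) ^ (s - 1) ≤ 2 ^ (s - 1) * (d : ℝ) ^ ((s - 1 : ℕ) : ℝ) := by
    rw [Real.rpow_natCast, ← mul_pow]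
    have : (a d : ℝ) ≤ d := by exact_mod_cast (ha d hd).2
    exact pow_le_pow_left₀ (by positivity) (by linarith [(by exact_mod_cast hd : (1 : ℝ) ≤ d)]) _
  have hb : ((d - a d : ℕ) : ℝ) ≤ c * Real.log d := by
    rcases hd.eq_or_lt with rfl | hd2
    · have : 1 - a 1 = 0 := by have := (ha 1 le_rfl).1; omega
      simp [this]
    · exact hc d hd2
  have hB : ((s : ℝ) + 1) ^ (d - a d) ≤ (d : ℝ) ^ (c * Real.log (s + 1)) := by
    rw [← Real.rpow_natCast, Real.rpow_def_of_pos (by positivity), Real.rpow_def_of_pos hd0]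
    exact Real.exp_le_exp.2 (by nlinarith [mul_le_mul_of_nonneg_left hb hlogs])
  calc ε' ^ (-(2 * t)) * (Real.exp 1 * ((a d : ℝ) + 1) ^ (s - 1) * ((s : ℝ) + 1) ^ (d - a d))
      ≤ ε' ^ (-(2 * t)) * (Real.exp 1 * (2 ^ (s - 1) * (d : ℝ) ^ ((s - 1 : ℕ) : ℝ)) *
          (d : ℝ) ^ (c * Real.log (s + 1))) := by gcongr
    _ = Real.exp 1 * 2 ^ (s - 1) * ε' ^ (-(2 * t)) *
          (d : ℝ) ^ (((s - 1 : ℕ) : ℝ) + c * Real.log (s + 1)) := by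
        rw [Real.rpow_add hd0]
        ring

end Sufficiency

section Characterization

variable {Λ : ℕ → ℝ} {a : ℕ → ℕ}

theorem symStrongPolyTractable_iff (hnn : ∀ m, 0 ≤ Λ m)
    (hmono : ∀ m n : ℕ, 1 ≤ m → m ≤ n → Λ n ≤ Λ m) (h2 : 0 < Λ 2)
    (had : ∀ d : ℕ, 1 ≤ d → a d ≤ d) :
    SymStrongPolyTractable Λ a ↔
      (∃ τ : ℝ, 0 < τ ∧ Summable fun m : ℕ => Λ (m + 1) ^ τ) ∧ Λ 2 < Λ 1 ∧
        ∃ B : ℕ, ∀ d : ℕ, 1 ≤ d → d - a d ≤ B := by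
  have h21 : Λ 2 ≤ Λ 1 := hmono 1 2 le_rfl one_le_two
  have h1 : 0 < Λ 1 := h2.trans_le h21
  refine ⟨fun h => ⟨h.symPolyTractable.summable hnn hmono h1, h.apply_two_lt_apply_one hmono h1,
    h.exists_sub_le h1 h2 h21 had⟩, ?_⟩
  rintro ⟨⟨τ, hτ, hsum⟩, hlt, B, hB⟩
  exact symStrongPolyTractable_of hnn hmono h1 had hτ hsum hlt hB

theorem symPolyTractable_iff (hnn : ∀ m, 0 ≤ Λ m)
    (hmono : ∀ m n : ℕ, 1 ≤ m → m ≤ n → Λ n ≤ Λ m) (h2 : 0 < Λ 2)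
    (ha : ∀ d : ℕ, 1 ≤ d → 1 ≤ a d ∧ a d ≤ d) :
    SymPolyTractable Λ a ↔
      (∃ τ : ℝ, 0 < τ ∧ Summable fun m : ℕ => Λ (m + 1) ^ τ) ∧
        ∃ c : ℝ, 0 < c ∧ ∀ d : ℕ, 2 ≤ d → ((d - a d : ℕ) : ℝ) ≤ c * Real.log d := by
  have h21 : Λ 2 ≤ Λ 1 := hmono 1 2 le_rfl one_le_two
  have h1 : 0 < Λ 1 := h2.trans_le h21
  refine ⟨fun h => ⟨h.summable hnn hmono h1,
    h.exists_sub_le_mul_log h1 h2 h21 fun d hd => (ha d hd).2⟩, ?_⟩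
  rintro ⟨⟨τ, hτ, hsum⟩, c, hc0, hc⟩
  exact symPolyTractable_of hnn hmono h1 ha hτ hsum hc0.le hc

end Characterization

/-- Characterization of (strong) polynomial tractability of symmetric tensor product
problems with respect to the normalized error criterion.  Here `b_d = d - a_d`. -/
theorem stmt_8
    (Λ : ℕ → ℝ) (hnn : ∀ m, 0 ≤ Λ m)
    (hmono : ∀ m n : ℕ, 1 ≤ m → m ≤ n → Λ n ≤ Λ m) (h2 : 0 < Λ 2)
    (a : ℕ → ℕ) (ha : ∀ d : ℕ, 1 ≤ d → 1 ≤ a d ∧ a d ≤ d) :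
    -- (A) strong polynomial tractability
    ((∃ C p : ℝ, 0 < C ∧ 0 < p ∧ ∀ d : ℕ, 1 ≤ d → ∀ ε' : ℝ, 0 < ε' → ε' < 1 →
        (symCountN Λ a d ε').Finite ∧
          ((symCountN Λ a d ε').ncard : ℝ) ≤ C * ε' ^ (-p)) ↔
      ((∃ τ : ℝ, 0 < τ ∧ Summable (fun m : ℕ => Λ (m + 1) ^ τ)) ∧
        Λ 2 < Λ 1 ∧ (∃ B : ℕ, ∀ d : ℕ, 1 ≤ d → d - a d ≤ B))) ∧
    -- (B) polynomial tractability
    ((∃ C p q : ℝ, 0 < C ∧ 0 < p ∧ 0 ≤ q ∧ ∀ d : ℕ, 1 ≤ d → ∀ ε' : ℝ, 0 < ε' → ε' < 1 →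
        (symCountN Λ a d ε').Finite ∧
          ((symCountN Λ a d ε').ncard : ℝ) ≤ C * ε' ^ (-p) * (d : ℝ) ^ q) ↔
      ((∃ τ : ℝ, 0 < τ ∧ Summable (fun m : ℕ => Λ (m + 1) ^ τ)) ∧
        (∃ c : ℝ, 0 < c ∧ ∀ d : ℕ, 2 ≤ d → ((d - a d : ℕ) : ℝ) ≤ c * Real.log d))) :=
  ⟨symStrongPolyTractable_iff hnn hmono h2 fun d hd => (ha d hd).2,
    symPolyTractable_iff hnn hmono h2 ha⟩
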